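/- arXiv:2512.03543 — 5 statements merged into one kernel-verified Lean document; each statement's English description precedes it below -/
import Mathlib

section
/- For the Pareto distribution with cdf F₀(x) = 1 - x^{-β}, x > 1, β > 0, and any γ < 0, k > 0, M ≠ 0: for all sufficiently large n and all y with -|M| ln n < y < -|M|(ln n)^{α₀} (for fixed α₀ ∈ (0,1/2)), F₀(F₀^{-1}(1 - k/n) + y) ≥ 1 - (k/n)·exp(γ y). -/
open Filter

/-- Pareto cdf `F₀(x) = 1 - x^{-β}` for `x > 1`. -/
noncomputable def paretoCDF (β x : ℝ) : ℝ := if 1 < x then 1 - x ^ (-β) else 0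

/-!
With `q = F₀⁻¹(1 - k/n) = (n/k)^{1/β}` we have `k/n = q^{-β}`, so the claim reads
`(q + y)^{-β} ≤ q^{-β} e^{γ y}`, i.e. `-β log(1 + y/q) ≤ γ y`. The window forces `y ≤ 0`, and
`|y| < |M| log n = o(q)`, so eventually `y/q ∈ [-1/2, 0]`, where `log(1 + t) ≥ 2t`. Hence the
left side is at most `-2β y/q`, which is at most `γ y` as soon as `q ≥ 2β/(-γ)`.
-/

namespace Real

theorem two_mul_le_log_one_add {t : ℝ} (ht : -1 / 2 ≤ t) (ht0 : t ≤ 0) :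
    2 * t ≤ log (1 + t) := by
  have hpos : 0 < 1 + t := by linarith
  calc 2 * t ≤ t / (1 + t) := by rw [le_div_iff₀ hpos]; nlinarith
    _ = 1 - (1 + t)⁻¹ := by field_simp; ring
    _ ≤ log (1 + t) := one_sub_inv_le_log_of_pos hpos

theorem rpow_neg_add_le_mul_exp {β γ q y : ℝ} (hβ : 0 ≤ β) (hq : 0 < q)
    (hy : -q / 2 ≤ y) (hy0 : y ≤ 0) (hγq : 2 * β ≤ -γ * q) :
    (q + y) ^ (-β) ≤ q ^ (-β) * exp (γ * y) := by
  set t := y / q with ht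
  have ht_lower : -1 / 2 ≤ t := by rw [ht, le_div_iff₀ hq]; linarith
  have ht_upper : t ≤ 0 := div_nonpos_of_nonpos_of_nonneg hy0 hq.le
  have h1t : 0 < 1 + t := by linarith
  have hsplit : q + y = q * (1 + t) := by rw [ht]; field_simp
  rw [hsplit, mul_rpow hq.le h1t.le, rpow_def_of_pos h1t]
  refine mul_le_mul_of_nonneg_left (exp_le_exp.mpr ?_) (by positivity)
  calc log (1 + t) * -β ≤ 2 * t * -β :=
        mul_le_mul_of_nonpos_right (two_mul_le_log_one_add ht_lower ht_upper) (by linarith)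
    _ = -(2 * β) / q * y := by rw [ht]; field_simp
    _ ≤ γ * y := mul_le_mul_of_nonpos_right (by rw [le_div_iff₀ hq]; linarith) hy0

theorem rpow_one_div_rpow_neg {a β : ℝ} (ha : 0 ≤ a) (hβ : β ≠ 0) :
    (a ^ (1 / β)) ^ (-β) = a⁻¹ := by
  rw [rpow_neg (rpow_nonneg ha _), one_div, rpow_inv_rpow ha hβ]

theorem isLittleO_log_div_rpow_atTop {k r : ℝ} (hk : 0 < k) (hr : 0 < r) :
    log =o[atTop] fun x => (x / k) ^ r := by
  have hunit : IsUnit (k ^ r)⁻¹ := (rpow_pos_of_pos hk r).ne'.isUnit.inv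
  refine ((isLittleO_log_rpow_atTop hr).const_mul_right' hunit).congr' EventuallyEq.rfl ?_
  filter_upwards [eventually_ge_atTop 0] with x hx
  rw [div_rpow hx hk.le, inv_mul_eq_div]

theorem eventually_mul_log_le_mul_div_rpow {k r ε : ℝ} (hk : 0 < k) (hr : 0 < r) (hε : 0 < ε)
    (c : ℝ) : ∀ᶠ x : ℝ in atTop, c * log x ≤ ε * (x / k) ^ r := by
  filter_upwards [((isLittleO_log_div_rpow_atTop hk hr).const_mul_left c).def hε,
    eventually_ge_atTop 0] with x hbound hx
  rw [norm_eq_abs, norm_of_nonneg (by positivity)] at hbound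
  exact (le_abs_self _).trans hbound

end Real

theorem pareto_quantile_lower_bound_general (β k γ M α₀ : ℝ) (hβ : 0 < β) (hk : 0 < k)
    (hγ : γ < 0) :
    ∀ᶠ n : ℕ in atTop, ∀ y : ℝ,
      -|M| * Real.log n < y → y < -|M| * (Real.log n) ^ α₀ →
      1 - (k / (n : ℝ)) * Real.exp (γ * y) ≤ paretoCDF β (((n : ℝ) / k) ^ (1 / β) + y) := by
  have hq_tendsto : Tendsto (fun n : ℕ => ((n : ℝ) / k) ^ (1 / β)) atTop atTop :=
    ((tendsto_rpow_atTop (by positivity)).comp (tendsto_id.atTop_div_const hk)).comp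
      tendsto_natCast_atTop_atTop
  have hlog_small := Real.eventually_mul_log_le_mul_div_rpow (r := 1 / β) hk (by positivity)
    one_half_pos |M|
  filter_upwards [tendsto_natCast_atTop_atTop.eventually hlog_small,
    hq_tendsto.eventually_ge_atTop 2, hq_tendsto.eventually_ge_atTop (2 * β / -γ)]
    with n hlog hq_two hq_large
  intro y hy_lower hy_upper
  set q := ((n : ℝ) / k) ^ (1 / β) with hq
  have hy_nonpos : y ≤ 0 := hy_upper.le.trans <| mul_nonpos_of_nonpos_of_nonneg
    (neg_nonpos.mpr (abs_nonneg M)) (Real.rpow_nonneg (Real.log_natCast_nonneg n) α₀)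
  have hγq : 2 * β ≤ -γ * q := by
    rw [div_le_iff₀ (neg_pos.mpr hγ)] at hq_large
    linarith
  have hkn : k / n = q ^ (-β) := by
    rw [hq, Real.rpow_one_div_rpow_neg (by positivity) hβ.ne', inv_div]
  rw [hkn, paretoCDF, if_pos (by linarith)]
  linarith [Real.rpow_neg_add_le_mul_exp hβ.le (by linarith) (by linarith) hy_nonpos hγq]

/-- Lower bound on the Pareto cdf below the high quantile: for all sufficiently large `n`
and all `y` with `-|M| ln n < y < -|M| (ln n)^{α₀}`,
`F₀(F₀^{-1}(1 - k/n) + y) ≥ 1 - (k/n) exp(γ y)`. -/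
theorem pareto_quantile_lower_bound (β k γ M α₀ : ℝ) (hβ : 0 < β) (hk : 0 < k)
    (hγ : γ < 0) (hM : M ≠ 0) (hα₀ : α₀ ∈ Set.Ioo (0 : ℝ) (1 / 2)) :
    ∀ᶠ n : ℕ in atTop, ∀ y : ℝ,
      -|M| * Real.log n < y → y < -|M| * (Real.log n) ^ α₀ →
      1 - (k / (n : ℝ)) * Real.exp (γ * y) ≤ paretoCDF β (((n : ℝ) / k) ^ (1 / β) + y) :=
  pareto_quantile_lower_bound_general β k γ M α₀ hβ hk hγ
end

section
/- For the Weibull distribution with cdf F₀(x) = 1 - exp(-x^β), x > 0, β ∈ (0,1), and any k > 0, M ∈ ℝ, and α₀ ∈ (0, min(1/2, 1/β - 1)): F₀(F₀^{-1}(1 - k/n) + M(ln n)^{α₀}) = 1 - k/n + o(1/n) as n → ∞. -/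
/-!
With `L = log (n / k)` the quantile is `L ^ (1 / β)` and `exp (-L) = k / n`, so
`n (F₀ (L ^ (1 / β) + h) - (1 - k / n)) = k (1 - exp (-δ))` with `δ = (L ^ (1 / β) + h) ^ β - L`.
Since `t ↦ t ^ β` is concave, `|δ| ≤ L ^ (1 - 1 / β) |h|`, and for `h = M (log n) ^ α₀` this is
`O ((log n) ^ (α₀ + 1 - 1 / β))`, which tends to `0` because `α₀ < 1 / β - 1`.
-/

open Filter

/-- Weibull cdf `F₀(x) = 1 - exp(-x^β)` for `x > 0`. -/
noncomputable def weibullCDF (β x : ℝ) : ℝ := if 0 < x then 1 - Real.exp (-(x ^ β)) else 0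

open Real Topology

theorem abs_one_add_rpow_sub_one_le {β t : ℝ} (hβ0 : 0 ≤ β) (hβ1 : β ≤ 1) (ht : -1 ≤ t) :
    |(1 + t) ^ β - 1| ≤ |t| := by
  rcases le_or_gt 0 t with ht0 | ht0
  · have hbern : (1 + t) ^ β ≤ 1 + β * t := rpow_one_add_le_one_add_mul_self ht hβ0 hβ1
    have : 1 ≤ (1 + t) ^ β := one_le_rpow (by linarith) hβ0
    rw [abs_of_nonneg (by linarith), abs_of_nonneg ht0]
    nlinarith
  · have : 1 + t ≤ (1 + t) ^ β := self_le_rpow_of_le_one (by linarith) (by linarith) hβ1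
    have : (1 + t) ^ β ≤ 1 := rpow_le_one (by linarith) (by linarith) hβ0
    rw [abs_of_nonpos (by linarith), abs_of_neg ht0]
    linarith

theorem abs_rpow_add_sub_rpow_le {β x h : ℝ} (hβ0 : 0 ≤ β) (hβ1 : β ≤ 1) (hx : 0 < x)
    (hxh : 0 ≤ x + h) : |(x + h) ^ β - x ^ β| ≤ x ^ (β - 1) * |h| := by
  have hxh' : x + h = x * (1 + h / x) := by field_simp
  have ht : -1 ≤ h / x := by rw [le_div_iff₀ hx]; linarith
  calc |(x + h) ^ β - x ^ β| = x ^ β * |(1 + h / x) ^ β - 1| := by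
        rw [hxh', mul_rpow hx.le (by linarith), ← mul_sub_one, abs_mul,
          abs_of_pos (rpow_pos_of_pos hx β)]
    _ ≤ x ^ β * |h / x| := by gcongr ?_ * ?_; exact abs_one_add_rpow_sub_one_le hβ0 hβ1 ht
    _ = x ^ (β - 1) * |h| := by
        rw [abs_div, abs_of_pos hx, rpow_sub_one hx.ne']; ring

section

variable {ι : Type*} {l : Filter ι} {β : ℝ} {x h : ι → ℝ}

theorem eventually_pos_add_of_tendsto_rpow_mul (hβ : 0 < β) (hx : Tendsto x l atTop)
    (hxh : Tendsto (fun i => x i ^ (β - 1) * h i) l (𝓝 0)) : ∀ᶠ i in l, 0 < x i + h i := by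
  have hdiv : Tendsto (fun i => x i ^ (-β) * (x i ^ (β - 1) * h i)) l (𝓝 0) := by
    simpa using ((tendsto_rpow_neg_atTop hβ).comp hx).mul hxh
  filter_upwards [hdiv.eventually (Ioo_mem_nhds (by norm_num : (-1 : ℝ) < 0) one_pos),
    hx.eventually_gt_atTop 0] with i hi hxi
  have : x i ^ (-β) * (x i ^ (β - 1) * h i) = h i / x i := by
    rw [← mul_assoc, ← rpow_add hxi, show -β + (β - 1) = -1 by ring, rpow_neg_one,
      inv_mul_eq_div]
  rw [this, lt_div_iff₀ hxi] at hi
  linarith [hi.1]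

theorem tendsto_rpow_add_sub_rpow (hβ0 : 0 < β) (hβ1 : β ≤ 1) (hx : Tendsto x l atTop)
    (hxh : Tendsto (fun i => x i ^ (β - 1) * h i) l (𝓝 0)) :
    Tendsto (fun i => (x i + h i) ^ β - x i ^ β) l (𝓝 0) := by
  refine squeeze_zero_norm' ?_ (by simpa using hxh.abs)
  filter_upwards [eventually_pos_add_of_tendsto_rpow_mul hβ0 hx hxh,
    hx.eventually_gt_atTop 0] with i hpos hxi
  rw [norm_eq_abs, abs_of_pos (rpow_pos_of_pos hxi _)]
  exact abs_rpow_add_sub_rpow_le hβ0.le hβ1 hxi hpos.le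

end

theorem tendsto_log_natCast_div_atTop {k : ℝ} (hk : 0 < k) :
    Tendsto (fun n : ℕ => log (n / k)) atTop atTop :=
  tendsto_log_atTop.comp (tendsto_natCast_atTop_atTop.atTop_div_const hk)

theorem tendsto_log_div_rpow_mul_log_rpow {k a b : ℝ} (hk : 0 < k) (hb : 0 ≤ b)
    (hab : a + b < 0) : Tendsto (fun n : ℕ => log (n / k) ^ a * log n ^ b) atTop (𝓝 0) := by
  have hlog : Tendsto (fun n : ℕ => log n) atTop atTop :=
    tendsto_log_atTop.comp tendsto_natCast_atTop_atTop
  have hbound : Tendsto (fun n : ℕ => 2 ^ b * log (n / k) ^ (a + b)) atTop (𝓝 0) := by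
    simpa using ((tendsto_rpow_neg_atTop (neg_pos.2 hab)).comp
      (tendsto_log_natCast_div_atTop hk)).const_mul (2 ^ b)
  have hlarge : ∀ᶠ n : ℕ in atTop,
      0 ≤ log n ∧ 0 < log (n / k) ∧ log n ≤ 2 * log (n / k) := by
    filter_upwards [eventually_gt_atTop 0, hlog.eventually_ge_atTop 1,
      hlog.eventually_ge_atTop (2 * log k)] with n hn h1 h2
    rw [log_div (by positivity) hk.ne']
    refine ⟨?_, ?_, ?_⟩ <;> linarith
  refine squeeze_zero' ?_ ?_ hbound
  · filter_upwards [hlarge] with n hn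
    exact mul_nonneg (rpow_nonneg hn.2.1.le _) (rpow_nonneg hn.1 _)
  · filter_upwards [hlarge] with n ⟨hlog0, hLpos, hle⟩
    calc log (n / k) ^ a * log n ^ b ≤ log (n / k) ^ a * (2 * log (n / k)) ^ b := by
          gcongr
      _ = 2 ^ b * log (n / k) ^ (a + b) := by
          rw [mul_rpow zero_le_two hLpos.le, rpow_add hLpos]; ring

theorem weibullCDF_sub_quantile_level {β k n y : ℝ} (hk : 0 < k) (hn : 0 < n) (hy : 0 < y) :
    n * (weibullCDF β y - (1 - k / n)) = k * (1 - exp (-(y ^ β - log (n / k)))) := by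
  rw [weibullCDF, if_pos hy, neg_sub, exp_sub, exp_log (by positivity), exp_neg]
  field_simp
  ring

theorem isLittleO_one_div_natCast_of_tendsto_mul {f : ℕ → ℝ}
    (hf : Tendsto (fun n : ℕ => n * f n) atTop (𝓝 0)) : f =o[atTop] fun n : ℕ => 1 / (n : ℝ) := by
  refine (Asymptotics.isLittleO_iff_tendsto' ?_).2
    (hf.congr fun n => by simp [div_eq_mul_inv, mul_comm])
  filter_upwards [eventually_gt_atTop 0] with n hn h
  simp at h; omega

/-- Shifting the `(1-k/n)`-quantile of the Weibull distribution (shape `β ∈ (0,1)`) by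
`M (ln n)^{α₀}` changes the cdf value only by `o(1/n)`, provided `α₀ < min(1/2, 1/β - 1)`. -/
theorem weibull_quantile_shift (β M k α₀ : ℝ) (hβ : β ∈ Set.Ioo (0 : ℝ) 1) (hk : 0 < k)
    (hα₀ : α₀ ∈ Set.Ioo (0 : ℝ) (min (1 / 2) (1 / β - 1))) :
    (fun n : ℕ => weibullCDF β ((Real.log ((n : ℝ) / k)) ^ (1 / β) + M * (Real.log n) ^ α₀)
      - (1 - k / (n : ℝ)))
      =o[atTop] fun n : ℕ => 1 / (n : ℝ) := by
  obtain ⟨hβ0, hβ1⟩ := hβ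
  obtain ⟨hα0, hα⟩ := hα₀
  have hL := tendsto_log_natCast_div_atTop hk
  have hx : Tendsto (fun n : ℕ => log (n / k) ^ (1 / β)) atTop atTop :=
    (tendsto_rpow_atTop (by positivity)).comp hL
  have hshift : Tendsto (fun n : ℕ => (log (n / k) ^ (1 / β)) ^ (β - 1) * (M * log n ^ α₀))
      atTop (𝓝 0) := by
    have hexp : 1 - 1 / β + α₀ < 0 := by linarith [min_le_right (1 / 2 : ℝ) (1 / β - 1)]
    have hlim := (tendsto_log_div_rpow_mul_log_rpow hk hα0.le hexp).const_mul M
    rw [mul_zero] at hlim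
    refine hlim.congr' ?_
    filter_upwards [hL.eventually_ge_atTop 0] with n hn
    rw [← rpow_mul hn, show 1 / β * (β - 1) = 1 - 1 / β by field_simp]
    ring
  have hδ := tendsto_rpow_add_sub_rpow hβ0 hβ1.le hx hshift
  apply isLittleO_one_div_natCast_of_tendsto_mul
  have hlim : Tendsto (fun n : ℕ => k * (1 - exp (-((log (n / k) ^ (1 / β) + M * log n ^ α₀) ^ β
      - (log (n / k) ^ (1 / β)) ^ β)))) atTop (𝓝 0) := by
    have hcont : Continuous fun t : ℝ => k * (1 - exp (-t)) := by fun_prop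
    have h := (hcont.tendsto 0).comp hδ
    rwa [neg_zero, exp_zero, sub_self, mul_zero] at h
  refine hlim.congr' ?_
  filter_upwards [eventually_pos_add_of_tendsto_rpow_mul hβ0 hx hshift,
    hL.eventually_ge_atTop 0, eventually_gt_atTop 0] with n hy hL0 hn
  rw [weibullCDF_sub_quantile_level hk (by positivity) hy, ← rpow_mul hL0,
    one_div_mul_cancel hβ0.ne', rpow_one]
end

section
/- For Submodel 1 with parameters λ > 0 and ζ₁ ≥ ζ₂ > 0, the boundary mass of the associated bivariate generalized Pareto distribution satisfies H₁({0}) = [1 - min(ζ₁/ζ₂, 1)]/ℓ(1,1) = 0 and H₂({0}) = [1 - min(ζ₂/ζ₁, 1)]/ℓ(1,1) = (1 - ζ₂/ζ₁)/ℓ(1,1) > 0 whenever ζ₁ > ζ₂; in particular the distribution places mass on exactly one boundary if and only if ζ₁ ≠ ζ₂. -/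
/-- The standard normal cumulative distribution function. -/
noncomputable def stdNormCDF (x : ℝ) : ℝ :=
  ((ProbabilityTheory.gaussianReal 0 1) (Set.Iic x)).toReal

lemma stdNormCDF_nonneg (x : ℝ) : 0 ≤ stdNormCDF x := ENNReal.toReal_nonneg

lemma stdNormCDF_le_one (x : ℝ) : stdNormCDF x ≤ 1 := by
  unfold stdNormCDF
  refine ENNReal.toReal_le_of_le_ofReal zero_le_one ?_
  simpa using MeasureTheory.prob_le_one (μ := ProbabilityTheory.gaussianReal 0 1) (s := Set.Iic x)

/-- For Submodel 1 with `λ > 0` and `ζ₁ ≥ ζ₂ > 0`, the boundary masses of the associated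
bivariate generalized Pareto distribution satisfy `H₁({0}) = 0`, and if `ζ₁ > ζ₂` then
`H₂({0}) = (1 - ζ₂/ζ₁)/ℓ(1,1) > 0`; the distribution places mass on exactly one boundary
if and only if `ζ₁ ≠ ζ₂`. -/
theorem submodel1_boundary_masses (lam ζ₁ ζ₂ : ℝ) (hlam : 0 < lam)
    (h2 : 0 < ζ₂) (h12 : ζ₂ ≤ ζ₁) :
    letI ℓ : ℝ → ℝ → ℝ := fun x₁ x₂ =>
      x₁ * (1 - stdNormCDF (-lam / 2 - (1 / lam) * Real.log ((x₁ * ζ₂) / (x₂ * ζ₁))) *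
        min (ζ₂ / ζ₁) 1) +
      x₂ * (1 - stdNormCDF (-lam / 2 - (1 / lam) * Real.log ((x₂ * ζ₁) / (x₁ * ζ₂))) *
        min (ζ₁ / ζ₂) 1)
    letI H₁ : ℝ := (1 - min (ζ₁ / ζ₂) 1) / ℓ 1 1
    letI H₂ : ℝ := (1 - min (ζ₂ / ζ₁) 1) / ℓ 1 1
    H₁ = 0 ∧
    (ζ₂ < ζ₁ → H₂ = (1 - ζ₂ / ζ₁) / ℓ 1 1 ∧ 0 < H₂) ∧
    (((H₁ = 0 ∧ 0 < H₂) ∨ (0 < H₁ ∧ H₂ = 0)) ↔ ζ₁ ≠ ζ₂) := by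
  beta_reduce
  have h1 : 0 < ζ₁ := lt_of_lt_of_le h2 h12
  have hmin1 : min (ζ₁ / ζ₂) 1 = 1 := min_eq_right ((le_div_iff₀ h2).mpr (by linarith))
  have hmin2 : min (ζ₂ / ζ₁) 1 = ζ₂ / ζ₁ := min_eq_left ((div_le_one h1).mpr h12)
  simp only [hmin1, hmin2, one_mul, mul_one, sub_zero, sub_self, zero_div]
  set a := stdNormCDF (-lam / 2 - 1 / lam * Real.log (ζ₂ / ζ₁)) with ha
  set b := stdNormCDF (-lam / 2 - 1 / lam * Real.log (ζ₁ / ζ₂)) with hb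
  set L := 1 - a * (ζ₂ / ζ₁) + (1 - b) with hL
  have ha0 : 0 ≤ a := stdNormCDF_nonneg _
  have ha1 : a ≤ 1 := stdNormCDF_le_one _
  have hb1 : b ≤ 1 := stdNormCDF_le_one _
  have hdiv : 0 ≤ ζ₂ / ζ₁ := le_of_lt (div_pos h2 h1)
  have hdiv1 : ζ₂ / ζ₁ ≤ 1 := (div_le_one h1).mpr h12
  have hkey : ζ₂ < ζ₁ → 0 < L ∧ 0 < 1 - ζ₂ / ζ₁ := by
    intro hlt
    have hd : ζ₂ / ζ₁ < 1 := (div_lt_one h1).mpr hlt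
    have : a * (ζ₂ / ζ₁) ≤ ζ₂ / ζ₁ := by nlinarith
    exact ⟨by rw [hL]; nlinarith, by linarith⟩
  refine ⟨trivial, ?_, ?_⟩
  · intro hlt
    obtain ⟨hp, hn⟩ := hkey hlt
    exact ⟨trivial, div_pos hn hp⟩
  · constructor
    · rintro (⟨_, hpos⟩ | ⟨hpos, _⟩)
      · intro heq
        rw [heq, div_self (ne_of_gt h2)] at hpos
        simp at hpos
      · exact absurd hpos (lt_irrefl 0)
    · intro hne
      have hlt : ζ₂ < ζ₁ := lt_of_le_of_ne h12 (Ne.symm hne)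
      obtain ⟨hp, hn⟩ := hkey hlt
      exact Or.inl ⟨trivial, div_pos hn hp⟩
end

section
/- Let Z ~ N(0,1) and V₀ ~ Exp(1) be independent, c ∈ ℝ, α > 0, and let Z* ~ N(0,1) with Corr(Z, Z*) = ρ, independent of V₀. Define X = Z + (1/α)·V₀·1{Z* > c}. Then for every z ∈ ℝ, P(X < z) = Φ(z) - exp(α²/2 - αz)·Φ₂((αρ - c, z - α); -ρ), where Φ₂(·;r) is the bivariate standard normal cdf with correlation r. -/
open MeasureTheory ProbabilityTheory

/-- Density of a bivariate standard normal vector with correlation `ρ`. -/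
noncomputable def binormPDF (ρ : ℝ) (p : ℝ × ℝ) : ℝ :=
  (2 * Real.pi * Real.sqrt (1 - ρ ^ 2))⁻¹ *
    Real.exp (-(p.1 ^ 2 - 2 * ρ * p.1 * p.2 + p.2 ^ 2) / (2 * (1 - ρ ^ 2)))

/-- Bivariate standard normal cdf with correlation `ρ`: `Φ₂((a,b); ρ)`. -/
noncomputable def binormCDF (ρ a b : ℝ) : ℝ :=
  ∫ p : ℝ × ℝ in Set.Iio a ×ˢ Set.Iio b, binormPDF ρ p

/-!
Conditionally on `(Z, Z*) = (x, y)`, the event `X < z` has probability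
`1{x < z} - 1{x < z, y > c} e^{α (x - z)}`, by independence and the exponential law of `V₀`.
Integrating against the bivariate normal density, the first term gives `Φ(z)`. In the second,
`Z* | Z = x` is `N(ρx, 1 - ρ²)`, and the factor `e^{αx}` turns the density of `Z` into
`e^{α²/2}` times that of `N(α, 1)` (completing the square); after the shift
`x ↦ x + α` the remaining integral is `Φ₂((z - α, αρ - c); -ρ)`, and `Φ₂` is symmetric
in its arguments.
-/

open Set Real
open scoped NNReal ENNReal

section Gaussian

variable {m : ℝ} {v : ℝ≥0}

lemma gaussianReal_map_standardize (hv : v ≠ 0) :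
    (gaussianReal m v).map (fun x => (x - m) / √v) = gaussianReal 0 1 := by
  have hv' : (0 : ℝ) < v := by positivity
  rw [show (fun x => (x - m) / √v) = (· / √(v : ℝ)) ∘ (· - m) from rfl,
    ← Measure.map_map (by fun_prop) (by fun_prop), gaussianReal_map_sub_const,
    gaussianReal_map_div_const, sub_self, zero_div]
  congr 1
  ext
  simp [Real.sq_sqrt hv'.le, hv'.ne']

lemma gaussianReal_Iio (hv : v ≠ 0) (t : ℝ) :
    gaussianReal m v (Iio t) = gaussianReal 0 1 (Iio ((t - m) / √v)) := by
  have hs : 0 < √(v : ℝ) := Real.sqrt_pos.2 (by positivity)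
  rw [← gaussianReal_map_standardize (m := m) hv,
    Measure.map_apply (by fun_prop) measurableSet_Iio]
  congr 1
  ext x
  simp [div_lt_div_iff_of_pos_right hs]

lemma stdNormCDF_eq_toReal_gaussianReal_Iio (t : ℝ) :
    stdNormCDF t = (gaussianReal 0 1 (Iio t)).toReal := by
  have := nullSingletonClass_gaussianReal (μ := 0) one_ne_zero
  rw [stdNormCDF, measure_congr Iio_ae_eq_Iic]

lemma setIntegral_gaussianPDFReal (hv : v ≠ 0) (s : Set ℝ) :
    ∫ y in s, gaussianPDFReal m v y = (gaussianReal m v s).toReal := by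
  rw [gaussianReal_apply_eq_integral m hv,
    ENNReal.toReal_ofReal (integral_nonneg fun y => gaussianPDFReal_nonneg m v y)]

lemma setIntegral_gaussianPDFReal_Iio (hv : v ≠ 0) (t : ℝ) :
    ∫ y in Iio t, gaussianPDFReal m v y = stdNormCDF ((t - m) / √v) := by
  rw [setIntegral_gaussianPDFReal hv, gaussianReal_Iio hv, stdNormCDF_eq_toReal_gaussianReal_Iio]

lemma setIntegral_gaussianPDFReal_Ioi (hv : v ≠ 0) (t : ℝ) :
    ∫ y in Ioi t, gaussianPDFReal m v y = stdNormCDF ((m - t) / √v) := by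
  rw [setIntegral_gaussianPDFReal hv, ← neg_neg m, ← gaussianReal_map_neg,
    Measure.map_apply (by fun_prop) measurableSet_Ioi,
    show (fun x => -x) ⁻¹' Ioi t = Iio (-t) by ext; simp,
    gaussianReal_Iio hv, ← stdNormCDF_eq_toReal_gaussianReal_Iio]
  ring_nf

lemma exp_mul_gaussianPDFReal (a x : ℝ) :
    exp (a * x) * gaussianPDFReal 0 1 x = exp (a ^ 2 / 2) * gaussianPDFReal 0 1 (x - a) := by
  simp only [gaussianPDFReal, NNReal.coe_one]
  rw [mul_left_comm, ← exp_add, mul_left_comm (exp _), ← exp_add]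
  congr 2
  ring

lemma setIntegral_Iio_comp_sub_right (g : ℝ → ℝ) (a t : ℝ) :
    ∫ x in Iio t, g (x - a) = ∫ x in Iio (t - a), g x := by
  rw [← integral_indicator measurableSet_Iio, ← integral_indicator measurableSet_Iio,
    ← integral_sub_right_eq_self ((Iio (t - a)).indicator g) a]
  congr 1
  ext x
  simp [indicator_apply]

end Gaussian

section Binormal

variable {r : ℝ}

lemma one_sub_sq_pos_of_mem_Ioo (hr : r ∈ Ioo (-1 : ℝ) 1) : 0 < 1 - r ^ 2 :=
  sub_pos.2 (sq_lt_one_iff_abs_lt_one _ |>.2 (abs_lt.2 hr))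

lemma toNNReal_one_sub_sq_ne_zero (hr : r ∈ Ioo (-1 : ℝ) 1) : (1 - r ^ 2).toNNReal ≠ 0 := by
  simpa using one_sub_sq_pos_of_mem_Ioo hr

lemma binormPDF_eq_mul (hr : r ∈ Ioo (-1 : ℝ) 1) (x y : ℝ) :
    binormPDF r (x, y) =
      gaussianPDFReal 0 1 x * gaussianPDFReal (r * x) (1 - r ^ 2).toNNReal y := by
  have h := one_sub_sq_pos_of_mem_Ioo hr
  simp only [binormPDF, gaussianPDFReal, Real.coe_toNNReal _ h.le, NNReal.coe_one]
  rw [mul_mul_mul_comm, ← exp_add, ← mul_inv, ← Real.sqrt_mul (by positivity),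
    show 2 * π * 1 * (2 * π * (1 - r ^ 2)) = (2 * π) ^ 2 * (1 - r ^ 2) by ring,
    Real.sqrt_mul (sq_nonneg _), Real.sqrt_sq (by positivity)]
  congr 2
  field_simp
  ring

lemma binormPDF_swap (r x y : ℝ) : binormPDF r (y, x) = binormPDF r (x, y) := by
  simp only [binormPDF]
  ring_nf

lemma binormPDF_nonneg (r : ℝ) (p : ℝ × ℝ) : 0 ≤ binormPDF r p := by
  unfold binormPDF
  positivity

lemma continuous_binormPDF (r : ℝ) : Continuous (binormPDF r) := by
  unfold binormPDF
  fun_prop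

lemma lintegral_binormPDF (hr : r ∈ Ioo (-1 : ℝ) 1) :
    ∫⁻ p, ENNReal.ofReal (binormPDF r p) = 1 := by
  rw [Measure.volume_eq_prod,
    lintegral_prod _ (continuous_binormPDF r).measurable.ennreal_ofReal.aemeasurable]
  simp only [binormPDF_eq_mul hr, ENNReal.ofReal_mul (gaussianPDFReal_nonneg _ _ _),
    lintegral_const_mul _ (measurable_gaussianPDFReal _ _).ennreal_ofReal]
  simp [lintegral_gaussianPDFReal_eq_one _ (toNNReal_one_sub_sq_ne_zero hr),
    lintegral_gaussianPDFReal_eq_one 0 one_ne_zero]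

lemma integrable_binormPDF (hr : r ∈ Ioo (-1 : ℝ) 1) : Integrable (binormPDF r) := by
  refine ⟨(continuous_binormPDF r).aestronglyMeasurable, ?_⟩
  rw [hasFiniteIntegral_iff_ofReal (ae_of_all _ (binormPDF_nonneg r)), lintegral_binormPDF hr]
  exact ENNReal.one_lt_top

lemma setIntegral_prod_mul_binormPDF (hr : r ∈ Ioo (-1 : ℝ) 1) {g : ℝ → ℝ} {s t : Set ℝ}
    (hg : IntegrableOn (fun p => g p.1 * binormPDF r p) (s ×ˢ t)) :
    ∫ p in s ×ˢ t, g p.1 * binormPDF r p =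
      ∫ x in s, g x * gaussianPDFReal 0 1 x *
        ∫ y in t, gaussianPDFReal (r * x) (1 - r ^ 2).toNNReal y := by
  rw [Measure.volume_eq_prod] at hg ⊢
  rw [setIntegral_prod _ hg]
  congr 1 with x
  simp only [binormPDF_eq_mul hr, ← mul_assoc, integral_const_mul]

lemma setIntegral_prod_binormPDF (hr : r ∈ Ioo (-1 : ℝ) 1) (s t : Set ℝ) :
    ∫ p in s ×ˢ t, binormPDF r p =
      ∫ x in s, gaussianPDFReal 0 1 x *
        ∫ y in t, gaussianPDFReal (r * x) (1 - r ^ 2).toNNReal y := by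
  simpa using setIntegral_prod_mul_binormPDF hr (g := fun _ => 1) (s := s) (t := t)
    (by simpa using (integrable_binormPDF hr).integrableOn)

lemma binormCDF_eq_integral (hr : r ∈ Ioo (-1 : ℝ) 1) (a b : ℝ) :
    binormCDF r a b =
      ∫ x in Iio a, gaussianPDFReal 0 1 x * stdNormCDF ((b - r * x) / √(1 - r ^ 2)) := by
  rw [binormCDF, setIntegral_prod_binormPDF hr]
  congr 1 with x
  rw [setIntegral_gaussianPDFReal_Iio (toNNReal_one_sub_sq_ne_zero hr),
    Real.coe_toNNReal _ (one_sub_sq_pos_of_mem_Ioo hr).le]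

lemma binormCDF_comm (r a b : ℝ) : binormCDF r a b = binormCDF r b a := by
  rw [binormCDF, binormCDF, Measure.volume_eq_prod,
    ← (Measure.measurePreserving_swap (μ := volume) (ν := volume)).setIntegral_preimage_emb
    MeasurableEquiv.prodComm.measurableEmbedding]
  simp only [preimage_swap_prod, Prod.swap, binormPDF_swap]

end Binormal

section Laws

variable {Ω : Type*} [MeasurableSpace Ω] {P : Measure Ω}

lemma map_eq_of_forall_measure_le_eq_cdf [IsProbabilityMeasure P] {V : Ω → ℝ}
    (hV : Measurable V) {μ : Measure ℝ} [IsProbabilityMeasure μ]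
    (h : ∀ v, (P {ω | V ω ≤ v}).toReal = cdf μ v) :
    P.map V = μ := by
  have := Measure.isProbabilityMeasure_map (μ := P) hV.aemeasurable
  refine Measure.ext_of_Iic _ _ fun v => ?_
  rw [Measure.map_apply hV measurableSet_Iic, ← ofReal_cdf, ← h,
    ENNReal.ofReal_toReal (measure_ne_top _ _)]
  rfl

lemma isCountablySpanning_range_Iio : IsCountablySpanning (range (Iio : ℝ → Set ℝ)) :=
  ⟨fun n : ℕ => Iio n, fun _ => mem_range_self _, by
    ext x
    simpa using exists_nat_gt x⟩

lemma MeasureTheory.Measure.ext_of_Iio_prod_Iio {μ ν : Measure (ℝ × ℝ)}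
    [IsProbabilityMeasure μ] [IsProbabilityMeasure ν]
    (h : ∀ a b, μ (Iio a ×ˢ Iio b) = ν (Iio a ×ˢ Iio b)) : μ = ν := by
  have hgen : MeasurableSpace.generateFrom (range (Iio : ℝ → Set ℝ)) =
      (inferInstance : MeasurableSpace ℝ) :=
    (borel_eq_generateFrom_Iio ℝ).symm.trans (BorelSpace.measurable_eq (α := ℝ)).symm
  refine ext_of_generate_finite _ (generateFrom_eq_prod hgen hgen
      isCountablySpanning_range_Iio isCountablySpanning_range_Iio).symm
    (isPiSystem_Iio.prod isPiSystem_Iio) ?_ (by simp)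
  rintro _ ⟨_, ⟨a, rfl⟩, _, ⟨b, rfl⟩, rfl⟩
  exact h a b

lemma ProbabilityTheory.IndepFun.measure_preimage_eq_lintegral [IsFiniteMeasure P]
    {β γ : Type*} [MeasurableSpace β] [MeasurableSpace γ] {W : Ω → β} {V : Ω → γ}
    (hWV : IndepFun W V P)
    (hW : Measurable W) (hV : Measurable V) {S : Set (β × γ)} (hS : MeasurableSet S) :
    P ((fun ω => (W ω, V ω)) ⁻¹' S) = ∫⁻ w, P.map V (Prod.mk w ⁻¹' S) ∂P.map W := by
  rw [← Measure.map_apply (hW.prodMk hV) hS,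
    (indepFun_iff_map_prod_eq_prod_map_map hW.aemeasurable hV.aemeasurable).1 hWV,
    Measure.prod_apply hS]

end Laws

noncomputable def binormMeasure (r : ℝ) : Measure (ℝ × ℝ) :=
  volume.withDensity fun p => ENNReal.ofReal (binormPDF r p)

section BinormMeasure

variable {r : ℝ}

lemma isProbabilityMeasure_binormMeasure (hr : r ∈ Ioo (-1 : ℝ) 1) :
    IsProbabilityMeasure (binormMeasure r) :=
  ⟨by rw [binormMeasure, withDensity_apply _ MeasurableSet.univ, Measure.restrict_univ,
    lintegral_binormPDF hr]⟩

lemma lintegral_ofReal_binormMeasure {g : ℝ × ℝ → ℝ} (hg : Measurable g) (hg0 : 0 ≤ g)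
    (hgi : Integrable fun p => g p * binormPDF r p) :
    ∫⁻ p, ENNReal.ofReal (g p) ∂binormMeasure r =
      ENNReal.ofReal (∫ p, g p * binormPDF r p) := by
  rw [binormMeasure, lintegral_withDensity_eq_lintegral_mul _
      (continuous_binormPDF r).measurable.ennreal_ofReal hg.ennreal_ofReal,
    ofReal_integral_eq_lintegral_ofReal hgi
      (ae_of_all _ fun p => mul_nonneg (hg0 p) (binormPDF_nonneg r p))]
  congr 1 with p
  rw [Pi.mul_apply, ← ENNReal.ofReal_mul (binormPDF_nonneg r p), mul_comm]

lemma binormMeasure_Iio_prod_Iio (hr : r ∈ Ioo (-1 : ℝ) 1) (a b : ℝ) :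
    binormMeasure r (Iio a ×ˢ Iio b) = ENNReal.ofReal (binormCDF r a b) := by
  rw [binormMeasure, withDensity_apply _ (measurableSet_Iio.prod measurableSet_Iio), binormCDF,
    ofReal_integral_eq_lintegral_ofReal (integrable_binormPDF hr).integrableOn
      (ae_of_all _ (binormPDF_nonneg r))]

lemma map_eq_binormMeasure {Ω : Type*} [MeasurableSpace Ω] {P : Measure Ω}
    [IsProbabilityMeasure P] {Z Zs : Ω → ℝ} (hZ : Measurable Z) (hZs : Measurable Zs)
    (hr : r ∈ Ioo (-1 : ℝ) 1)
    (h : ∀ a b, (P {ω | Z ω < a ∧ Zs ω < b}).toReal = binormCDF r a b) :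
    P.map (fun ω => (Z ω, Zs ω)) = binormMeasure r := by
  have := Measure.isProbabilityMeasure_map (μ := P) (hZ.prodMk hZs).aemeasurable
  have := isProbabilityMeasure_binormMeasure hr
  refine Measure.ext_of_Iio_prod_Iio fun a b => ?_
  rw [Measure.map_apply (hZ.prodMk hZs) (measurableSet_Iio.prod measurableSet_Iio),
    binormMeasure_Iio_prod_Iio hr, ← h, ENNReal.ofReal_toReal (measure_ne_top _ _)]
  rfl

end BinormMeasure

instance nullSingletonClass_expMeasure (r : ℝ) : NullSingletonClass (expMeasure r) := by
  unfold expMeasure gammaMeasure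
  infer_instance

section FactorModel

variable {ρ α : ℝ}

/-- The conditional probability `P(X < z | (Z, Z*) = p)`. -/
noncomputable def factorCondCDF (α c z : ℝ) (p : ℝ × ℝ) : ℝ :=
  (Iio z ×ˢ univ).indicator 1 p - (Iio z ×ˢ Ioi c).indicator (fun q => exp (α * (q.1 - z))) p

lemma factorCondCDF_nonneg (hα : 0 ≤ α) (c z : ℝ) : 0 ≤ factorCondCDF α c z := by
  intro p
  by_cases hx : p.1 < z
  · have : exp (α * (p.1 - z)) ≤ 1 :=
      exp_le_one_iff.2 (mul_nonpos_of_nonneg_of_nonpos hα (by linarith))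
    by_cases hy : c < p.2 <;> simp [factorCondCDF, hx, hy, this]
  · simp [factorCondCDF, hx]

lemma measurable_factorCondCDF (α c z : ℝ) : Measurable (factorCondCDF α c z) :=
  (measurable_const.indicator (measurableSet_Iio.prod MeasurableSet.univ)).sub
    ((by fun_prop : Measurable fun q : ℝ × ℝ => exp (α * (q.1 - z))).indicator
      (measurableSet_Iio.prod measurableSet_Ioi))

lemma measurable_factorModel (α c : ℝ) :
    Measurable fun q : (ℝ × ℝ) × ℝ => q.1.1 + 1 / α * q.2 * (if c < q.1.2 then 1 else 0) :=
  measurable_fst.fst.add ((measurable_const.mul measurable_snd).mul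
    (Measurable.ite (measurableSet_lt measurable_const measurable_fst.snd) measurable_const
      measurable_const))

lemma expMeasure_factor_slice (hα : 0 < α) (c z : ℝ) (p : ℝ × ℝ) :
    expMeasure 1 {v | p.1 + 1 / α * v * (if c < p.2 then 1 else 0) < z} =
      ENNReal.ofReal (factorCondCDF α c z p) := by
  have := isProbabilityMeasure_expMeasure one_pos
  obtain ⟨x, y⟩ := p
  by_cases hy : c < y
  · have hset : {v | x + 1 / α * v * (if c < y then 1 else 0) < z} = Iio (α * (z - x)) := by
      ext v
      simp only [hy, if_true, mul_one, mem_ofPred_eq, mem_Iio]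
      rw [one_div_mul_eq_div, ← lt_sub_iff_add_lt', div_lt_iff₀' hα]
    rw [hset, measure_congr Iio_ae_eq_Iic, ← ofReal_cdf, cdf_expMeasure_eq one_pos]
    congr 1
    by_cases hx : x < z
    · simp [factorCondCDF, hx, hy, (by nlinarith : 0 ≤ α * (z - x))]
      ring_nf
    · have : α * (z - x) ≤ 0 := mul_nonpos_of_nonneg_of_nonpos hα.le (by linarith)
      rw [show factorCondCDF α c z (x, y) = 0 by simp [factorCondCDF, hx]]
      split_ifs with h
      · simp [le_antisymm this h]
      · rfl
  · by_cases hx : x < z <;> simp [factorCondCDF, hx, hy]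

lemma integrableOn_exp_mul_binormPDF (hρ : ρ ∈ Ioo (-1 : ℝ) 1) (hα : 0 ≤ α) (c z : ℝ) :
    IntegrableOn (fun p : ℝ × ℝ => exp (α * (p.1 - z)) * binormPDF ρ p)
      (Iio z ×ˢ Ioi c) := by
  refine (integrable_binormPDF hρ).integrableOn.mono'
    (Continuous.aestronglyMeasurable (by unfold binormPDF; fun_prop)) ?_
  filter_upwards [ae_restrict_mem (measurableSet_Iio.prod measurableSet_Ioi)] with p hp
  rw [norm_mul, Real.norm_of_nonneg (exp_pos _).le, Real.norm_of_nonneg (binormPDF_nonneg ρ p)]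
  exact mul_le_of_le_one_left (binormPDF_nonneg ρ p)
    (exp_le_one_iff.2 (mul_nonpos_of_nonneg_of_nonpos hα (sub_nonpos.2 hp.1.le)))

lemma factorCondCDF_mul_binormPDF (α c z : ℝ) :
    (fun p => factorCondCDF α c z p * binormPDF ρ p) = fun p =>
      (Iio z ×ˢ univ).indicator (binormPDF ρ) p -
        (Iio z ×ˢ Ioi c).indicator (fun q => exp (α * (q.1 - z)) * binormPDF ρ q) p := by
  ext p
  simp [factorCondCDF, sub_mul, indicator_apply]

lemma integrable_factorCondCDF_mul_binormPDF (hρ : ρ ∈ Ioo (-1 : ℝ) 1) (hα : 0 ≤ α)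
    (c z : ℝ) :
    Integrable fun p => factorCondCDF α c z p * binormPDF ρ p := by
  rw [factorCondCDF_mul_binormPDF]
  exact ((integrable_binormPDF hρ).indicator (measurableSet_Iio.prod MeasurableSet.univ)).sub
    ((integrableOn_exp_mul_binormPDF hρ hα c z).integrable_indicator
      (measurableSet_Iio.prod measurableSet_Ioi))

lemma setIntegral_Iio_prod_univ_binormPDF (hρ : ρ ∈ Ioo (-1 : ℝ) 1) (z : ℝ) :
    ∫ p in Iio z ×ˢ univ, binormPDF ρ p = stdNormCDF z := by
  simp only [setIntegral_prod_binormPDF hρ, Measure.restrict_univ,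
    integral_gaussianPDFReal_eq_one _ (toNNReal_one_sub_sq_ne_zero hρ), mul_one,
    setIntegral_gaussianPDFReal_Iio one_ne_zero]
  simp

lemma setIntegral_exp_mul_binormPDF (hρ : ρ ∈ Ioo (-1 : ℝ) 1) (hα : 0 ≤ α) (c z : ℝ) :
    ∫ p in Iio z ×ˢ Ioi c, exp (α * (p.1 - z)) * binormPDF ρ p =
      exp (α ^ 2 / 2 - α * z) * binormCDF (-ρ) (α * ρ - c) (z - α) := by
  have hρ' : -ρ ∈ Ioo (-1 : ℝ) 1 := ⟨by linarith [hρ.2], by linarith [hρ.1]⟩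
  calc ∫ p in Iio z ×ˢ Ioi c, exp (α * (p.1 - z)) * binormPDF ρ p
      = ∫ x in Iio z, exp (α * (x - z)) * gaussianPDFReal 0 1 x *
          stdNormCDF ((ρ * x - c) / √(1 - ρ ^ 2)) := by
        rw [setIntegral_prod_mul_binormPDF hρ (g := fun x => exp (α * (x - z)))
          (integrableOn_exp_mul_binormPDF hρ hα c z)]
        congr 1 with x
        rw [setIntegral_gaussianPDFReal_Ioi (toNNReal_one_sub_sq_ne_zero hρ),
          Real.coe_toNNReal _ (one_sub_sq_pos_of_mem_Ioo hρ).le]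
    _ = ∫ x in Iio z, exp (α ^ 2 / 2 - α * z) * (gaussianPDFReal 0 1 (x - α) *
          stdNormCDF ((ρ * x - c) / √(1 - ρ ^ 2))) := by
        congr 1 with x
        have h := exp_mul_gaussianPDFReal α x
        rw [mul_sub, sub_eq_add_neg, exp_add, sub_eq_add_neg (α ^ 2 / 2), exp_add]
        linear_combination exp (-(α * z)) * stdNormCDF ((ρ * x - c) / √(1 - ρ ^ 2)) * h
    _ = exp (α ^ 2 / 2 - α * z) * ∫ u in Iio (z - α), gaussianPDFReal 0 1 u *
          stdNormCDF ((α * ρ - c - -ρ * u) / √(1 - (-ρ) ^ 2)) := by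
        rw [integral_const_mul, ← setIntegral_Iio_comp_sub_right]
        congr 2 with x
        rw [neg_sq]
        ring_nf
    _ = exp (α ^ 2 / 2 - α * z) * binormCDF (-ρ) (α * ρ - c) (z - α) := by
        rw [binormCDF_comm, binormCDF_eq_integral hρ']

lemma integral_factorCondCDF_mul_binormPDF (hρ : ρ ∈ Ioo (-1 : ℝ) 1) (hα : 0 ≤ α)
    (c z : ℝ) :
    ∫ p, factorCondCDF α c z p * binormPDF ρ p =
      stdNormCDF z - exp (α ^ 2 / 2 - α * z) * binormCDF (-ρ) (α * ρ - c) (z - α) := by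
  rw [factorCondCDF_mul_binormPDF, integral_sub
      ((integrable_binormPDF hρ).indicator (measurableSet_Iio.prod MeasurableSet.univ))
      ((integrableOn_exp_mul_binormPDF hρ hα c z).integrable_indicator
        (measurableSet_Iio.prod measurableSet_Ioi)),
    integral_indicator (measurableSet_Iio.prod MeasurableSet.univ),
    integral_indicator (measurableSet_Iio.prod measurableSet_Ioi),
    setIntegral_Iio_prod_univ_binormPDF hρ, setIntegral_exp_mul_binormPDF hρ hα]

end FactorModel

/-- Marginal cdf of `X = Z + (1/α) V₀ 1{Z* > c}`, where `(Z, Z*)` is bivariate standard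
normal with correlation `ρ` and `V₀` is an independent unit exponential:
`P(X < z) = Φ(z) - exp(α²/2 - αz) Φ₂((αρ - c, z - α); -ρ)`. -/
theorem factor_model_marginal_cdf
    {Ω : Type*} [MeasurableSpace Ω] (P : Measure Ω) [IsProbabilityMeasure P]
    (Z Zs V : Ω → ℝ) (hZ : Measurable Z) (hZs : Measurable Zs) (hV : Measurable V)
    (ρ c α : ℝ) (hα : 0 < α) (hρ : ρ ∈ Set.Ioo (-1 : ℝ) 1)
    (hZZs : ∀ a b : ℝ, (P {ω | Z ω < a ∧ Zs ω < b}).toReal = binormCDF ρ a b)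
    (hVexp : ∀ v : ℝ, (P {ω | V ω ≤ v}).toReal =
      if 0 ≤ v then 1 - Real.exp (-v) else 0)
    (hindep : IndepFun (fun ω => (Z ω, Zs ω)) V P) :
    ∀ z : ℝ,
      (P {ω | Z ω + (1 / α) * V ω * (if c < Zs ω then 1 else 0) < z}).toReal =
        stdNormCDF z - Real.exp (α ^ 2 / 2 - α * z) * binormCDF (-ρ) (α * ρ - c) (z - α) := by
  intro z
  have := isProbabilityMeasure_expMeasure one_pos
  have hlawV : P.map V = expMeasure 1 := map_eq_of_forall_measure_le_eq_cdf hV fun v => by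
    rw [hVexp, cdf_expMeasure_eq one_pos, one_mul]
  have hevent := hindep.measure_preimage_eq_lintegral (hZ.prodMk hZs) hV
    (measurable_factorModel α c (measurableSet_Iio (a := z)))
  simp only [preimage, mem_Iio, mem_ofPred_eq] at hevent
  rw [hlawV, map_eq_binormMeasure hZ hZs hρ hZZs,
    lintegral_congr (expMeasure_factor_slice hα c z),
    lintegral_ofReal_binormMeasure (measurable_factorCondCDF α c z)
      (factorCondCDF_nonneg hα.le c z) (integrable_factorCondCDF_mul_binormPDF hρ hα.le c z)]
    at hevent
  refine (congrArg ENNReal.toReal hevent).trans ?_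
  rw [ENNReal.toReal_ofReal (integral_nonneg fun p =>
      mul_nonneg (factorCondCDF_nonneg hα.le c z p) (binormPDF_nonneg ρ p)),
    integral_factorCondCDF_mul_binormPDF hρ hα.le]
end

section
/- Let Z ~ N(0,1) and V ~ Exp(1) be independent, α > 0, and X = Z + V/α. Then P(X < z) = Φ(z) - exp(α²/2 - αz)·Φ(z - α), and consequently 1 - P(X < z) ~ exp(α²/2 - αz) as z → ∞; hence setting z_n(x) = α/2 + α^{-1} ln(n/x) yields P(X < z_n(x)) = 1 - x/n + o(1/n) as n → ∞, for every fixed x > 0. -/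
open Filter MeasureTheory ProbabilityTheory

/-!
Conditioning on `Z`, `P(Z + V/α < z) = E[(1 - e^{-α(z - Z)}) 1_{Z ≤ z}]`, and the exponential tilt
`e^{αs} φ(s) = e^{α²/2} φ(s - α)` of the Gaussian density turns the second term into
`e^{α²/2 - αz} Φ(z - α)`. The same tilt gives the Chernoff bound
`1 - Φ(z) ≤ e^{α²/2 - αz} (1 - Φ(z - α)) = o(e^{-αz})`, so the exponential term carries the whole
tail; `z_n(x)` is chosen so that `e^{α²/2 - αz_n(x)} = x/n`.
-/

open Real Set Topology
open scoped NNReal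

theorem MeasureTheory.Measure.ext_of_Iio_finite {α : Type*} [TopologicalSpace α]
    {m : MeasurableSpace α} [SecondCountableTopology α] [LinearOrder α] [OrderTopology α]
    [BorelSpace α] (μ ν : Measure α) [IsFiniteMeasure μ] (h_univ : μ univ = ν univ)
    (h : ∀ a, μ (Iio a) = ν (Iio a)) : μ = ν :=
  ext_of_generate_finite _ (BorelSpace.measurable_eq.trans (borel_eq_generateFrom_Iio α))
    isPiSystem_Iio (by rintro - ⟨a, rfl⟩; exact h a) h_univ

theorem MeasureTheory.Measure.measureReal_prod_apply {α β : Type*} [MeasurableSpace α]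
    [MeasurableSpace β] {μ : Measure α} {ν : Measure β} [IsFiniteMeasure ν] {s : Set (α × β)}
    (hs : MeasurableSet s) : (μ.prod ν).real s = ∫ x, ν.real (Prod.mk x ⁻¹' s) ∂μ := by
  rw [measureReal_def, Measure.prod_apply hs, ← integral_toReal
    (measurable_measure_prodMk_left hs).aemeasurable (ae_of_all _ fun _ ↦ measure_lt_top _ _)]
  rfl

namespace ProbabilityTheory

lemma exp_mul_gaussianPDFReal (μ : ℝ) (v : ℝ≥0) (t x : ℝ) :
    exp (t * x) * gaussianPDFReal μ v x
      = exp (μ * t + v * t ^ 2 / 2) * gaussianPDFReal (μ + v * t) v x := by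
  simp only [gaussianPDFReal_def]
  rw [mul_left_comm, ← exp_add, mul_left_comm (exp _), ← exp_add]
  rcases eq_or_ne v 0 with rfl | hv
  · simp
  · congr 2
    field_simp
    ring

lemma setIntegral_exp_mul_gaussianReal (μ : ℝ) {v : ℝ≥0} (hv : v ≠ 0) (t : ℝ) (s : Set ℝ) :
    ∫ x in s, exp (t * x) ∂gaussianReal μ v
      = exp (μ * t + v * t ^ 2 / 2) * (gaussianReal (μ + v * t) v).real s := by
  rw [gaussianReal_of_var_ne_zero _ hv, setIntegral_withDensity_eq_setIntegral_toReal_smul' s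
    (measurable_gaussianPDF μ v) (ae_of_all _ fun _ ↦ gaussianPDF_lt_top),
    measureReal_def, gaussianReal_apply_eq_integral _ hv,
    ENNReal.toReal_ofReal (setIntegral_nonneg_of_ae (ae_of_all _ (gaussianPDFReal_nonneg _ _))),
    ← integral_const_mul]
  simp only [toReal_gaussianPDF, smul_eq_mul, mul_comm (gaussianPDFReal μ v _),
    exp_mul_gaussianPDFReal]

lemma gaussianReal_real_Ioi_le (μ : ℝ) {v : ℝ≥0} (hv : v ≠ 0) {t : ℝ} (ht : 0 ≤ t) (z : ℝ) :
    (gaussianReal μ v).real (Ioi z)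
      ≤ exp (μ * t + v * t ^ 2 / 2 - t * z) * (gaussianReal (μ + v * t) v).real (Ioi z) := by
  have h_markov : ∀ x ∈ Ioi z, (1 : ℝ) ≤ exp (-(t * z)) * exp (t * x) := fun x hx ↦ by
    rw [← exp_add, one_le_exp_iff]
    nlinarith [mem_Ioi.mp hx]
  calc (gaussianReal μ v).real (Ioi z) = ∫ _ in Ioi z, (1 : ℝ) ∂gaussianReal μ v := by simp
    _ ≤ ∫ x in Ioi z, exp (-(t * z)) * exp (t * x) ∂gaussianReal μ v :=
      setIntegral_mono_on (integrable_const 1).integrableOn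
        ((integrable_exp_mul_gaussianReal t).const_mul _).integrableOn measurableSet_Ioi h_markov
    _ = _ := by
      rw [integral_const_mul, setIntegral_exp_mul_gaussianReal μ hv, ← mul_assoc, ← exp_add]
      ring_nf

end ProbabilityTheory

lemma stdNormCDF_sub (α z : ℝ) : stdNormCDF (z - α) = (gaussianReal α 1).real (Iic z) := by
  rw [← zero_add α, ← gaussianReal_map_add_const, map_measureReal_apply (measurable_add_const _)
    measurableSet_Iic, preimage_add_const_Iic, zero_add]
  rfl

lemma one_sub_stdNormCDF (z : ℝ) : 1 - stdNormCDF z = (gaussianReal 0 1).real (Ioi z) := by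
  rw [← compl_Iic, probReal_compl_eq_one_sub measurableSet_Iic]
  rfl

lemma tendsto_one_sub_stdNormCDF_div_exp {α : ℝ} (hα : 0 ≤ α) :
    Tendsto (fun z ↦ (1 - stdNormCDF z) / exp (α ^ 2 / 2 - α * z)) atTop (𝓝 0) := by
  have h_tail : Tendsto (fun z ↦ (gaussianReal α 1).real (Ioi z)) atTop (𝓝 0) := by
    simpa [← probReal_compl_eq_one_sub measurableSet_Iic, cdf_eq_real] using
      (tendsto_cdf_atTop (gaussianReal α 1)).const_sub 1
  refine squeeze_zero (fun z ↦ div_nonneg ?_ (exp_pos _).le) (fun z ↦ ?_) h_tail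
  · rw [one_sub_stdNormCDF]; exact measureReal_nonneg
  · rw [div_le_iff₀' (exp_pos _), one_sub_stdNormCDF]
    simpa using gaussianReal_real_Ioi_le 0 one_ne_zero hα z

instance : IsProbabilityMeasure (expMeasure 1) := isProbabilityMeasure_expMeasure one_pos

lemma expMeasure_real_Iio {r : ℝ} (hr : 0 < r) (x : ℝ) :
    (expMeasure r).real (Iio x) = if 0 ≤ x then 1 - exp (-(r * x)) else 0 := by
  have := isProbabilityMeasure_expMeasure hr
  have h_atom : expMeasure r {x} = 0 :=
    withDensity_absolutelyContinuous _ _ Real.volume_singleton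
  rw [measureReal_congr (Iio_ae_eq_Iic' h_atom), ← cdf_eq_real, cdf_expMeasure_eq hr]

section

variable {Ω : Type*} [MeasurableSpace Ω] {P : Measure Ω}

lemma hasLaw_gaussianReal_of_measureReal_lt [IsProbabilityMeasure P] {Z : Ω → ℝ}
    (hZ : Measurable Z) (h : ∀ a, P.real {ω | Z ω < a} = stdNormCDF a) :
    HasLaw Z (gaussianReal 0 1) P where
  aemeasurable := hZ.aemeasurable
  map_eq := by
    have : IsProbabilityMeasure (P.map Z) := Measure.isProbabilityMeasure_map hZ.aemeasurable
    refine Measure.ext_of_Iio_finite _ _ (by simp) fun a ↦ ?_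
    have := nullSingletonClass_gaussianReal (μ := 0) one_ne_zero
    rw [Measure.map_apply hZ measurableSet_Iio, measure_congr Iio_ae_eq_Iic,
      ← ofReal_measureReal, ← ofReal_measureReal]
    exact congrArg ENNReal.ofReal (h a)

lemma hasLaw_expMeasure_of_measureReal_le [IsProbabilityMeasure P] {V : Ω → ℝ}
    (hV : Measurable V) (h : ∀ v, P.real {ω | V ω ≤ v} = if 0 ≤ v then 1 - exp (-v) else 0) :
    HasLaw V (expMeasure 1) P where
  aemeasurable := hV.aemeasurable
  map_eq := by
    have : IsProbabilityMeasure (P.map V) := Measure.isProbabilityMeasure_map hV.aemeasurable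
    refine Measure.eq_of_cdf _ _ (StieltjesFunction.ext fun v ↦ ?_)
    rw [cdf_eq_real, map_measureReal_apply hV measurableSet_Iic, cdf_expMeasure_eq one_pos, one_mul]
    exact h v

lemma measureReal_add_div_lt_eq_integral [IsFiniteMeasure P] {Z V : Ω → ℝ} {μ ν : Measure ℝ}
    [IsFiniteMeasure ν] (hZ : HasLaw Z μ P) (hV : HasLaw V ν P) (hZV : IndepFun Z V P) {α : ℝ}
    (hα : 0 < α) (z : ℝ) :
    P.real {ω | Z ω + V ω / α < z} = ∫ s, ν.real (Iio (α * (z - s))) ∂μ := by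
  have hS : MeasurableSet {p : ℝ × ℝ | p.1 + p.2 / α < z} := by measurability
  have h_section (s : ℝ) : Prod.mk s ⁻¹' {p : ℝ × ℝ | p.1 + p.2 / α < z} = Iio (α * (z - s)) := by
    ext v
    simp [← div_lt_iff₀' hα, lt_sub_iff_add_lt']
  rw [(hZV.hasLaw_prod hZ hV).measureReal_eq hS, Measure.measureReal_prod_apply hS]
  simp_rw [h_section]

end

/-- The CDF of the exponentially modified Gaussian law `N(0,1) ∗ Exp(α)`. -/
noncomputable def expModGaussianCDF (α z : ℝ) : ℝ :=
  stdNormCDF z - exp (α ^ 2 / 2 - α * z) * stdNormCDF (z - α)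

lemma integral_expMeasure_real_Iio_gaussianReal {α : ℝ} (hα : 0 < α) (z : ℝ) :
    ∫ s, (expMeasure 1).real (Iio (α * (z - s))) ∂gaussianReal 0 1
      = expModGaussianCDF α z := by
  have h_integrand (s : ℝ) : (expMeasure 1).real (Iio (α * (z - s)))
      = (Iic z).indicator (fun s ↦ 1 - exp (-(α * z)) * exp (α * s)) s := by
    rw [expMeasure_real_Iio one_pos, indicator_apply]
    simp only [mem_Iic, one_mul, mul_nonneg_iff_of_pos_left hα, sub_nonneg, ← exp_add]
    ring_nf
  simp_rw [h_integrand]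
  rw [integral_indicator measurableSet_Iic, integral_sub (integrable_const _).integrableOn
    ((integrable_exp_mul_gaussianReal α).const_mul _).integrableOn, integral_const_mul,
    setIntegral_exp_mul_gaussianReal 0 one_ne_zero, expModGaussianCDF, stdNormCDF_sub]
  simp only [setIntegral_const, smul_eq_mul, mul_one, NNReal.coe_one, zero_mul, zero_add, one_mul]
  rw [← mul_assoc, ← exp_add, neg_add_eq_sub]
  rfl

lemma tendsto_one_sub_expModGaussianCDF_div_exp {α : ℝ} (hα : 0 ≤ α) :
    Tendsto (fun z ↦ (1 - expModGaussianCDF α z) / exp (α ^ 2 / 2 - α * z)) atTop (𝓝 1) := by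
  have h_shift : Tendsto (fun z ↦ stdNormCDF (z - α)) atTop (𝓝 1) := by
    refine (tendsto_cdf_atTop (gaussianReal α 1)).congr fun z ↦ ?_
    rw [cdf_eq_real, stdNormCDF_sub]
  refine (zero_add (1 : ℝ) ▸ (tendsto_one_sub_stdNormCDF_div_exp hα).add h_shift).congr fun z ↦ ?_
  rw [expModGaussianCDF]
  field_simp
  ring

lemma isLittleO_sub_div_natCast_of_tendsto_div_exp {T : ℝ → ℝ} {α x : ℝ} (hα : 0 < α)
    (hx : 0 < x) (hT : Tendsto (fun z ↦ T z / exp (α ^ 2 / 2 - α * z)) atTop (𝓝 1)) :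
    (fun n : ℕ ↦ T (α / 2 + α⁻¹ * log (n / x)) - x / n) =o[atTop] fun n : ℕ ↦ 1 / (n : ℝ) := by
  set z : ℕ → ℝ := fun n ↦ α / 2 + α⁻¹ * log (n / x)
  have h_exp : ∀ᶠ n : ℕ in atTop, exp (α ^ 2 / 2 - α * z n) = x / n := by
    filter_upwards [eventually_gt_atTop 0] with n hn
    have hnx : 0 < (n : ℝ) / x := div_pos (Nat.cast_pos.mpr hn) hx
    rw [show α ^ 2 / 2 - α * z n = -log (n / x) by simp only [z]; field_simp; ring,
      exp_neg, exp_log hnx, inv_div]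
  have h_z : Tendsto z atTop atTop :=
    tendsto_atTop_add_const_left _ _ <| (tendsto_log_atTop.comp
      (tendsto_natCast_atTop_atTop.atTop_div_const hx)).const_mul_atTop (inv_pos.mpr hα)
  have h_ratio : Tendsto (fun n ↦ T (z n) / (x / n) - 1) atTop (𝓝 0) := by
    simpa using ((hT.comp h_z).congr' (h_exp.mono fun n hn ↦ by simp [hn])).sub_const 1
  have h_bigO : (fun n : ℕ ↦ x * (1 / (n : ℝ))) =O[atTop] fun n : ℕ ↦ 1 / (n : ℝ) :=
    (Asymptotics.isBigO_refl _ _).const_mul_left x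
  refine (h_bigO.mul_isLittleO (Asymptotics.isLittleO_one_iff ℝ |>.mpr h_ratio)).congr' ?_
    (by simp only [mul_one]; rfl)
  filter_upwards [eventually_gt_atTop 0] with n hn
  have : (n : ℝ) ≠ 0 := by positivity
  simp only [z]
  field_simp

/-- For `X = Z + V/α` with `Z` standard normal and `V` unit exponential independent:
`P(X < z) = Φ(z) - exp(α²/2 - αz) Φ(z - α)`, hence `1 - P(X < z) ~ exp(α²/2 - αz)` as
`z → ∞`, and with `z_n(x) = α/2 + α⁻¹ ln(n/x)` one has
`P(X < z_n(x)) = 1 - x/n + o(1/n)` for every fixed `x > 0`. -/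
theorem normal_plus_exponential_tail
    {Ω : Type*} [MeasurableSpace Ω] (P : Measure Ω) [IsProbabilityMeasure P]
    (Z V : Ω → ℝ) (hZmeas : Measurable Z) (hVmeas : Measurable V)
    (α : ℝ) (hα : 0 < α)
    (hZ : ∀ a : ℝ, (P {ω | Z ω < a}).toReal = stdNormCDF a)
    (hVexp : ∀ v : ℝ, (P {ω | V ω ≤ v}).toReal =
      if 0 ≤ v then 1 - Real.exp (-v) else 0)
    (hindep : IndepFun Z V P)
    (F : ℝ → ℝ) (hF : ∀ z, F z = (P {ω | Z ω + V ω / α < z}).toReal) :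
    (∀ z : ℝ, F z = stdNormCDF z -
        Real.exp (α ^ 2 / 2 - α * z) * stdNormCDF (z - α)) ∧
    Tendsto (fun z : ℝ => (1 - F z) / Real.exp (α ^ 2 / 2 - α * z)) atTop (nhds 1) ∧
    (∀ x : ℝ, 0 < x →
      (fun n : ℕ => F (α / 2 + α⁻¹ * Real.log ((n : ℝ) / x)) - (1 - x / (n : ℝ)))
        =o[atTop] fun n : ℕ => 1 / (n : ℝ)) := by
  have hZlaw := hasLaw_gaussianReal_of_measureReal_lt hZmeas hZ
  have hVlaw := hasLaw_expMeasure_of_measureReal_le hVmeas hVexp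
  have h_cdf (z : ℝ) : F z = expModGaussianCDF α z := by
    rw [hF, ← measureReal_def, measureReal_add_div_lt_eq_integral hZlaw hVlaw hindep hα,
      integral_expMeasure_real_Iio_gaussianReal hα]
  have h_tail : Tendsto (fun z ↦ (1 - F z) / exp (α ^ 2 / 2 - α * z)) atTop (𝓝 1) := by
    simpa only [h_cdf] using tendsto_one_sub_expModGaussianCDF_div_exp hα.le
  refine ⟨h_cdf, h_tail, fun x hx ↦ ?_⟩
  exact (isLittleO_sub_div_natCast_of_tendsto_div_exp hα hx h_tail).neg_left.congr_left
    fun n ↦ by ring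
end
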